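/- Let X = ℓ¹ and f_n(x) = |x_n|^{1+1/n}. For the sequence h_n = n^{-1} e_n one has ‖h_n‖ = 1/n → 0 and (I_f(h_n) − I_f(0))/‖h_n‖ = n^{-1/n} → 1, where I_f(x) = Σ_k |x_k|^{1+1/k}. -/

import Mathlib

open Filter Topology
noncomputable section

/-- The Banach space `ℓ¹` of absolutely summable real sequences. -/
abbrev ellOne : Type := lp (fun _ : ℕ => ℝ) 1

/-- The canonical basis vector `e_n` of `ℓ¹` (here indexed from `0`, so `e n` plays the role
of the paper's `e_{n+1}`). -/
def e (n : ℕ) : ellOne := lp.single 1 n (1 : ℝ)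

/-- The integrand `f_n(x) = |x_n|^{1+1/n}` (with index shift: exponent `1 + 1/(n+1)`). -/
def fn (n : ℕ) (x : ellOne) : ℝ := |x n| ^ ((1 : ℝ) + 1 / (n + 1))

/-- `I_f(x) = Σ_k |x_k|^{1+1/k}`. -/
def If (x : ellOne) : ℝ := ∑' n : ℕ, fn n x

/-- The test vector `h_n = n⁻¹ e_n` (with the index shift `n ↦ n+1`). -/
def h (n : ℕ) : ellOne := ((n : ℝ) + 1)⁻¹ • e n

lemma Real.rpow_one_add_div_self {x : ℝ} (hx : 0 < x) (t : ℝ) : x ^ (1 + t) / x = x ^ t := by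
  rw [Real.rpow_add hx, Real.rpow_one, mul_div_cancel_left₀ _ hx.ne']

lemma smul_e_eq_single (c : ℝ) (n : ℕ) : c • e n = lp.single 1 n c := by
  rw [e, ← lp.single_smul, smul_eq_mul, mul_one]

lemma If_single (n : ℕ) (c : ℝ) : If (lp.single 1 n c) = |c| ^ ((1 : ℝ) + 1 / (n + 1)) := by
  rw [If, tsum_eq_single n fun k hk => ?_]
  · simp only [fn, lp.single_apply_self]
  · rw [fn, lp.single_apply, Pi.single_eq_of_ne hk, abs_zero, Real.zero_rpow (by positivity)]

lemma If_zero : If 0 = 0 := by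
  rw [← lp.single_zero 1 0, If_single, abs_zero, Real.zero_rpow (by positivity)]

lemma norm_h (n : ℕ) : ‖h n‖ = 1 / ((n : ℝ) + 1) := by
  rw [h, smul_e_eq_single, lp.norm_single one_pos, norm_inv, Real.norm_of_nonneg (by positivity),
    one_div]

lemma If_h (n : ℕ) : If (h n) = ((n : ℝ) + 1)⁻¹ ^ ((1 : ℝ) + 1 / (n + 1)) := by
  rw [h, smul_e_eq_single, If_single, abs_of_pos (by positivity)]

/-- For `h_n = n⁻¹ e_n` one has `‖h_n‖ = 1/n → 0` while the difference quotient
`(I_f(h_n) − I_f(0))/‖h_n‖ = n^{-1/n} → 1`, so `I_f` fails to be Fréchet differentiable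
at `0` with derivative `0`. -/
theorem diff_quotient_tendsto_one :
    (∀ n : ℕ, ‖h n‖ = 1 / ((n : ℝ) + 1)) ∧
    Tendsto (fun n : ℕ => ‖h n‖) atTop (𝓝 0) ∧
    (∀ n : ℕ, (If (h n) - If 0) / ‖h n‖ = ((n : ℝ) + 1) ^ (-(1 / ((n : ℝ) + 1)))) ∧
    Tendsto (fun n : ℕ => ((n : ℝ) + 1) ^ (-(1 / ((n : ℝ) + 1)))) atTop (𝓝 1) := by
  refine ⟨norm_h, ?_, fun n => ?_, ?_⟩
  · simpa only [norm_h] using tendsto_one_div_add_atTop_nhds_zero_nat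
  · have hn : (0 : ℝ) < n + 1 := by positivity
    rw [If_h, If_zero, norm_h, sub_zero, one_div, Real.rpow_one_add_div_self (inv_pos.2 hn),
      Real.inv_rpow hn.le, Real.rpow_neg hn.le]
  · have hshift : Tendsto (fun n : ℕ => (n : ℝ) + 1) atTop atTop :=
      tendsto_atTop_add_const_right atTop 1 tendsto_natCast_atTop_atTop
    simpa only [Function.comp_def, neg_div] using tendsto_rpow_neg_div.comp hshift
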